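/- arXiv:1109.1645 — 5 statements merged into one kernel-verified Lean document; each statement's English description precedes it below -/
import Mathlib

section
/- Let ℏ ≠ 0, a, t ∈ ℂ and m a nonnegative integer. The quantized Painlevé II Hamiltonian H_II = (1/2)(ℏ d/dx)² − (x² + t/2)(ℏ d/dx) + a·x maps the space of polynomials of degree ≤ m into itself if and only if a = mℏ. -/
open Polynomial

/-- The quantized Painlevé II Hamiltonian acting on polynomials:
`H_II Φ = (1/2)(ℏ d/dx)² Φ − (x² + t/2)(ℏ d/dx) Φ + a·x·Φ`. -/
noncomputable def HII (ℏ a t : ℂ) (Φ : ℂ[X]) : ℂ[X] :=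
  (1 / 2 : ℂ) • (ℏ ^ 2 • derivative (derivative Φ))
    - (X ^ 2 + C (t / 2)) * (ℏ • derivative Φ)
    + C a * X * Φ

/-! Only `−ℏ x² Φ' + a x Φ` raises the degree, so for `deg Φ ≤ n` the coefficient of `x^(n+1)`
in `H_II Φ` is `(a − nℏ) Φₙ`. Taking `Φ = x^m` forces `a = mℏ`; conversely `a = mℏ` kills the
coefficient of `x^(m+1)`, and higher ones vanish because `Φₙ = 0` for `n > m`. -/

lemma coeff_X_sq_mul_derivative_succ {R : Type*} [CommSemiring R] (p : R[X]) (n : ℕ) :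
    (X ^ 2 * derivative p).coeff (n + 1) = n * p.coeff n := by
  rcases n with _ | k
  · simp [coeff_X_pow_mul']
  · rw [mul_comm, show k + 1 + 1 = k + 2 from rfl, coeff_mul_X_pow, coeff_derivative]
    push_cast; ring

lemma coeff_HII_succ (ℏ a t : ℂ) (Φ : ℂ[X]) (n : ℕ) :
    (HII ℏ a t Φ).coeff (n + 1) = (a - n * ℏ) * Φ.coeff n
      - ℏ * (t / 2) * (n + 2) * Φ.coeff (n + 2)
      + ℏ ^ 2 / 2 * ((n + 3) * (n + 2)) * Φ.coeff (n + 3) := by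
  have hX := coeff_X_sq_mul_derivative_succ Φ n
  simp only [HII, add_mul, mul_smul_comm, coeff_add, coeff_sub, coeff_smul, coeff_C_mul,
    mul_assoc, coeff_X_mul, coeff_derivative, hX, smul_eq_mul]
  push_cast
  ring

lemma coeff_HII_succ_of_degree_le {ℏ a t : ℂ} {Φ : ℂ[X]} {m n : ℕ} (hΦ : Φ.degree ≤ m)
    (hmn : m ≤ n) : (HII ℏ a t Φ).coeff (n + 1) = (a - n * ℏ) * Φ.coeff n := by
  have hvanish {k : ℕ} (hk : n < k) : Φ.coeff k = 0 :=
    coeff_eq_zero_of_degree_lt (hΦ.trans_lt (by exact_mod_cast hmn.trans_lt hk))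
  rw [coeff_HII_succ, hvanish (by omega : n < n + 2), hvanish (by omega : n < n + 3)]
  ring

theorem stmt1_general (ℏ a t : ℂ) (m : ℕ) :
    (∀ Φ : ℂ[X], Φ.degree ≤ m → (HII ℏ a t Φ).degree ≤ m) ↔ a = m * ℏ := by
  constructor
  · intro h
    have htop : (HII ℏ a t (X ^ m)).coeff (m + 1) = 0 :=
      coeff_eq_zero_of_degree_lt <|
        (h _ (degree_X_pow_le m)).trans_lt (by exact_mod_cast m.lt_succ_self)
    rw [coeff_HII_succ_of_degree_le (degree_X_pow_le m) le_rfl, coeff_X_pow_self, mul_one] at htop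
    exact sub_eq_zero.mp htop
  · rintro rfl Φ hΦ
    refine degree_le_iff_coeff_zero _ _ |>.mpr fun k hk ↦ ?_
    obtain ⟨n, rfl⟩ := Nat.exists_eq_add_of_lt (by exact_mod_cast hk : m < k)
    rw [coeff_HII_succ_of_degree_le hΦ (m.le_add_right n)]
    rcases n.eq_zero_or_pos with rfl | hn
    · simp
    · rw [coeff_eq_zero_of_degree_lt (hΦ.trans_lt (by exact_mod_cast Nat.lt_add_of_pos_right hn)),
        mul_zero]

/-- `H_II` preserves the space of polynomials of degree ≤ m iff `a = mℏ`. -/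
theorem stmt1 (ℏ a t : ℂ) (hℏ : ℏ ≠ 0) (m : ℕ) :
    (∀ Φ : ℂ[X], Φ.degree ≤ m → (HII ℏ a t Φ).degree ≤ m) ↔ a = m * ℏ :=
  stmt1_general ℏ a t m
end

section
/- Let ℏ ≠ 0, a, b, t ∈ ℂ with t ≠ 0, and m a nonnegative integer. The operator H_III given by t·H_III(Φ) = x²ℏ²Φ'' − (x² + bx + t)ℏΦ' + a x Φ maps polynomials of degree ≤ m to polynomials of degree ≤ m if and only if a = mℏ. -/
open Polynomial

/-- The quantized Painlevé III Hamiltonian acting on polynomials: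
`t·H_III Φ = x²(ℏ d/dx)² Φ − (x² + bx + t)(ℏ d/dx) Φ + a·x·Φ`,
so `H_III = (1/t) · (…)`. -/
noncomputable def HIII (ℏ a b t : ℂ) (Φ : ℂ[X]) : ℂ[X] :=
  C t⁻¹ *
    (X ^ 2 * (ℏ ^ 2 • derivative (derivative Φ))
      - (X ^ 2 + C b * X + C t) * (ℏ • derivative Φ)
      + C a * X * Φ)

lemma coeffA (ℏ a b t : ℂ) (Φ : ℂ[X]) (k : ℕ) :
    (HIII ℏ a b t Φ).coeff (k+2) =
      t⁻¹ * (ℏ^2 * (Φ.coeff (k+2) * (k+1) * (k+2))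
        - (ℏ * (Φ.coeff (k+1) * (k+1)) + b * (ℏ * (Φ.coeff (k+2) * (k+2)))
          + t * (ℏ * (Φ.coeff (k+3) * (k+3))))
        + a * Φ.coeff (k+1)) := by
  unfold HIII
  have e1 : (X^2 * (ℏ^2 • derivative (derivative Φ))).coeff (k+2)
      = ℏ^2 * (Φ.coeff (k+2) * (k+1) * (k+2)) := by
    rw [coeff_X_pow_mul, coeff_smul, coeff_derivative, coeff_derivative, smul_eq_mul]
    push_cast; ring
  have e2 : ((X^2 + C b * X + C t) * (ℏ • derivative Φ)).coeff (k+2)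
      = ℏ * (Φ.coeff (k+1) * (k+1)) + b * (ℏ * (Φ.coeff (k+2) * (k+2)))
          + t * (ℏ * (Φ.coeff (k+3) * (k+3))) := by
    rw [add_mul, add_mul, coeff_add, coeff_add, coeff_X_pow_mul, mul_assoc,
      coeff_C_mul]
    have : (X * (ℏ • derivative Φ)).coeff (k+2) = (ℏ • derivative Φ).coeff (k+1) := by
      rw [show k+2 = (k+1)+1 from rfl, coeff_X_mul]
    rw [this, coeff_C_mul]
    simp only [coeff_smul, coeff_derivative, smul_eq_mul]
    push_cast; ring
  have e3 : (C a * X * Φ).coeff (k+2) = a * Φ.coeff (k+1) := by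
    rw [mul_assoc, coeff_C_mul, show k+2 = (k+1)+1 from rfl, coeff_X_mul]
  rw [coeff_C_mul, coeff_add, coeff_sub, e1, e2, e3]

/-- `H_III` preserves the space of polynomials of degree ≤ m iff `a = mℏ`. -/
theorem stmt2 (ℏ a b t : ℂ) (hℏ : ℏ ≠ 0) (ht : t ≠ 0) (m : ℕ) :
    (∀ Φ : ℂ[X], Φ.degree ≤ m → (HIII ℏ a b t Φ).degree ≤ m) ↔ a = m * ℏ := by
  constructor
  · intro h
    rcases Nat.eq_zero_or_pos m with hm | hm
    · subst hm
      have h1 := h 1 (by simp)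
      have hc : (HIII ℏ a b t 1).coeff 1 = 0 :=
        coeff_eq_zero_of_degree_lt (lt_of_le_of_lt h1 (by norm_num))
      unfold HIII at hc
      simp at hc
      simpa [ht] using hc
    · obtain ⟨k, rfl⟩ : ∃ k, m = k + 1 := ⟨m - 1, (Nat.succ_pred_eq_of_pos hm).symm⟩
      have h1 := h (X ^ (k + 1)) (by simp)
      have hc : (HIII ℏ a b t (X ^ (k + 1))).coeff (k + 2) = 0 :=
        coeff_eq_zero_of_degree_lt (lt_of_le_of_lt h1 (by
          exact_mod_cast Nat.lt_succ_self (k + 1)))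
      rw [coeffA] at hc
      simp [coeff_X_pow] at hc
      rcases hc with hc | hc
      · exact absurd hc ht
      · push_cast
        linear_combination hc
  · intro ha Φ hΦ
    have hz : ∀ i : ℕ, m < i → Φ.coeff i = 0 := fun i hi =>
      coeff_eq_zero_of_degree_lt (lt_of_le_of_lt hΦ (by exact_mod_cast hi))
    rw [degree_le_iff_coeff_zero]
    intro j hj
    have hj' : m < j := by exact_mod_cast hj
    match j, hj' with
    | 1, hj' =>
      have hm0 : m = 0 := by omega
      subst hm0
      have hΦ' : Φ = C (Φ.coeff 0) := eq_C_of_degree_le_zero (by exact_mod_cast hΦ)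
      rw [hΦ']
      unfold HIII
      simp at ha
      simp [ha]
    | (k+2), hj' =>
      rw [coeffA, hz (k+2) (by omega), hz (k+3) (by omega)]
      rcases Nat.lt_or_ge m (k+1) with h1 | h1
      · rw [hz (k+1) h1]; ring
      · have : m = k + 1 := by omega
        subst this
        rw [ha]
        push_cast
        ring
end

section
/- Let ℏ ≠ 0, a, b, c, t ∈ ℂ with t ≠ 0, and m a nonnegative integer. The operator defined by t·H_V(Φ) = x(x−1)ℏ²Φ'' + (tx² − (b+c+t)x + b)ℏΦ' + a(b+c−a+ℏ+t−tx)Φ maps polynomials of degree ≤ m to polynomials of degree ≤ m if and only if a = mℏ. -/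
/-!
In the monomial basis `H_V` is tridiagonal: the coefficient of `x^(n+1)` in `H_V Φ` involves only
`Φ_n, Φ_{n+1}, Φ_{n+2}`, and the only term raising the degree, `x (ℏ x d/dx − a)`, contributes
`(nℏ − a) Φ_n`. Hence on polynomials of degree `≤ m` the sole obstruction to preserving the degree
is the coefficient `(mℏ − a) Φ_m` of `x^(m+1)`, which vanishes for all `Φ` iff `a = mℏ`.
-/

open Polynomial

/-- The quantized Painlevé V Hamiltonian acting on polynomials:
`t·H_V Φ = x(x−1)(ℏ d/dx)² Φ + (tx² − (b+c+t)x + b)(ℏ d/dx) Φ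
  + a(b+c−a+ℏ+t−tx)·Φ`. -/
noncomputable def HV (ℏ a b c t : ℂ) (Φ : ℂ[X]) : ℂ[X] :=
  C t⁻¹ *
    (X * (X - 1) * (ℏ ^ 2 • derivative (derivative Φ))
      + (C t * X ^ 2 - C (b + c + t) * X + C b) * (ℏ • derivative Φ)
      + (C (a * (b + c - a + ℏ + t)) - C (a * t) * X) * Φ)

theorem Polynomial.coeff_X_mul_derivative {R : Type*} [Semiring R] (p : R[X]) (n : ℕ) :
    (X * derivative p).coeff n = n * p.coeff n := by
  rcases n with _ | n
  · simp
  · rw [coeff_X_mul, coeff_derivative, ← Nat.cast_succ, Nat.cast_comm]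

theorem coeff_HV_succ (ℏ a b c t : ℂ) (ht : t ≠ 0) (Φ : ℂ[X]) (n : ℕ) :
    (HV ℏ a b c t Φ).coeff (n + 1) = (n * ℏ - a) * Φ.coeff n + t⁻¹ *
      ((ℏ ^ 2 * n * (n + 1) - (b + c + t) * ℏ * (n + 1) + a * (b + c - a + ℏ + t))
          * Φ.coeff (n + 1)
        + (n + 2) * (b * ℏ - (n + 1) * ℏ ^ 2) * Φ.coeff (n + 2)) := by
  have hexpand : HV ℏ a b c t Φ = C t⁻¹ *
      (C (ℏ ^ 2) * (X * (X * derivative (derivative Φ)))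
        - C (ℏ ^ 2) * (X * derivative (derivative Φ))
        + C (t * ℏ) * (X * (X * derivative Φ)) - C ((b + c + t) * ℏ) * (X * derivative Φ)
        + C (b * ℏ) * derivative Φ + C (a * (b + c - a + ℏ + t)) * Φ - C (a * t) * (X * Φ)) := by
    simp only [HV, smul_eq_C_mul, C_mul, C_pow]
    ring
  rw [hexpand]
  simp only [coeff_C_mul, coeff_add, coeff_sub, coeff_X_mul, coeff_X_mul_derivative,
    coeff_derivative]
  field_simp
  push_cast
  ring

theorem coeff_HV_succ_of_degree_le (ℏ a b c t : ℂ) (ht : t ≠ 0) {Φ : ℂ[X]} {m n : ℕ}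
    (hΦ : Φ.degree ≤ m) (hmn : m ≤ n) :
    (HV ℏ a b c t Φ).coeff (n + 1) = (n * ℏ - a) * Φ.coeff n := by
  have hvanish : ∀ k, n < k → Φ.coeff k = 0 := fun k hk =>
    coeff_eq_zero_of_degree_lt (hΦ.trans_lt (by exact_mod_cast hmn.trans_lt hk))
  rw [coeff_HV_succ ℏ a b c t ht, hvanish (n + 1) (by omega), hvanish (n + 2) (by omega)]
  ring

theorem stmt4_general (ℏ a b c t : ℂ) (ht : t ≠ 0) (m : ℕ) :
    (∀ Φ : ℂ[X], Φ.degree ≤ m → (HV ℏ a b c t Φ).degree ≤ m) ↔ a = m * ℏ := by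
  constructor
  · intro hpreserves
    have hzero : (HV ℏ a b c t (X ^ m)).coeff (m + 1) = 0 :=
      coeff_eq_zero_of_degree_lt
        ((hpreserves _ (degree_X_pow_le m)).trans_lt (by exact_mod_cast m.lt_succ_self))
    rw [coeff_HV_succ_of_degree_le ℏ a b c t ht (degree_X_pow_le m) le_rfl,
      coeff_X_pow_self] at hzero
    linear_combination -hzero
  · rintro rfl Φ hΦ
    rw [degree_le_iff_coeff_zero]
    intro k hk
    have hmk : m < k := by exact_mod_cast hk
    obtain ⟨n, rfl⟩ := Nat.exists_eq_add_one.mpr (m.zero_le.trans_lt hmk)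
    rw [coeff_HV_succ_of_degree_le _ _ b c t ht hΦ (Nat.lt_succ_iff.mp hmk)]
    rcases (Nat.lt_succ_iff.mp hmk).eq_or_lt with rfl | hmn
    · ring
    · rw [coeff_eq_zero_of_degree_lt (hΦ.trans_lt (by exact_mod_cast hmn)), mul_zero]

/-- `H_V` preserves the space of polynomials of degree ≤ m iff `a = mℏ`. -/
theorem stmt4 (ℏ a b c t : ℂ) (hℏ : ℏ ≠ 0) (ht : t ≠ 0) (m : ℕ) :
    (∀ Φ : ℂ[X], Φ.degree ≤ m → (HV ℏ a b c t Φ).degree ≤ m) ↔ a = m * ℏ :=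
  stmt4_general ℏ a b c t ht m
end

section
/- Let ℏ, a, b, t ∈ ℂ. If Φ : ℂ × ℂ → ℂ is smooth and solves ℏ ∂Φ/∂t = H_IV(x, ℏ∂_x, −a, −b, t)Φ, where H_IV(x, ℏ∂_x, a, b, t) = x(ℏ∂_x)² + (x² − tx − b)ℏ∂_x − ax − (a−2b)t, then Ψ(x,t) := Φ(ix, it) (i = √−1) solves ℏ ∂Ψ/∂t = H'_IV Ψ, where H'_IV is H_IV(x, ℏ∂_x, a, b, t) with ℏ replaced by −ℏ. -/
/-!
Writing `Ψ(x, t) = Φ(i x, i t)`, the chain rule gives `∂ₜΨ = i ∂ₜΦ`, `∂ₓΨ = i ∂ₓΦ` and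
`∂ₓ²Ψ = -∂ₓ²Φ` at `(i x, i t)`. Multiplying the equation for `Φ` at `(i x, i t)` by `i` and using
`i² = -1` turns every coefficient of `H_IV(x, ℏ∂ₓ, -a, -b, t)` into that of `H_IV` with `ℏ ↦ -ℏ`.
-/

open Complex

theorem deriv_deriv_comp_mul_left {𝕜 E : Type*} [NontriviallyNormedField 𝕜]
    [NormedAddCommGroup E] [NormedSpace 𝕜 E] (c : 𝕜) (f : 𝕜 → E) (x : 𝕜) :
    deriv (fun y => deriv (fun z => f (c * z)) y) x = c ^ 2 • deriv (deriv f) (c * x) := by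
  have hf' : (fun y => deriv (fun z => f (c * z)) y) = fun y => c • deriv f (c * y) :=
    funext (deriv_comp_mul_left c f)
  rw [hf', deriv_fun_const_smul_field, deriv_comp_mul_left, smul_smul, sq]

theorem stmt8_general (ℏ a b : ℂ) (Φ : ℂ → ℂ → ℂ)
    (heq : ∀ x t : ℂ,
      ℏ * deriv (fun s => Φ x s) t =
        x * ℏ ^ 2 * deriv (fun y => deriv (fun z => Φ z t) y) x
          + (x ^ 2 - t * x - (-b)) * ℏ * deriv (fun y => Φ y t) x
          - (-a) * x * Φ x t - ((-a) - 2 * (-b)) * t * Φ x t) :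
    ∀ x t : ℂ,
      ℏ * deriv (fun s => Φ (I * x) (I * s)) t =
        x * (-ℏ) ^ 2 * deriv (fun y => deriv (fun z => Φ (I * z) (I * t)) y) x
          + (x ^ 2 - t * x - b) * (-ℏ) * deriv (fun y => Φ (I * y) (I * t)) x
          - a * x * Φ (I * x) (I * t) - (a - 2 * b) * t * Φ (I * x) (I * t) := by
  intro x t
  have hΨt : deriv (fun s => Φ (I * x) (I * s)) t = I * deriv (Φ (I * x)) (I * t) :=
    deriv_comp_mul_left I (Φ (I * x)) t
  have hΨx : deriv (fun y => Φ (I * y) (I * t)) x = I * deriv (fun z => Φ z (I * t)) (I * x) :=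
    deriv_comp_mul_left I (fun z => Φ z (I * t)) x
  have hΨxx := deriv_deriv_comp_mul_left I (fun z => Φ z (I * t)) x
  rw [hΨt, hΨx, hΨxx, smul_eq_mul, I_sq]
  linear_combination I * heq (I * x) (I * t)
    + (ℏ ^ 2 * x * deriv (fun y => deriv (fun z => Φ z (I * t)) y) (I * x)
      + ℏ * I * x * (x - t) * deriv (fun z => Φ z (I * t)) (I * x)
      + (x * a + t * a - 2 * t * b) * Φ (I * x) (I * t)) * I_sq

/-- Symmetry of the Schrödinger equation for quantum Painlevé IV: if `Φ`
solves `ℏ∂ₜΦ = H_IV(x, ℏ∂ₓ, −a, −b, t)Φ`, where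
`H_IV(x, ℏ∂ₓ, a, b, t) = x(ℏ∂ₓ)² + (x² − tx − b)ℏ∂ₓ − ax − (a−2b)t`,
then `Ψ(x,t) = Φ(ix, it)` solves `ℏ∂ₜΨ = H'_IV Ψ` with `ℏ` replaced by `−ℏ`. -/
theorem stmt8 (ℏ a b : ℂ) (Φ : ℂ → ℂ → ℂ)
    (hΦ : ContDiff ℂ ⊤ fun p : ℂ × ℂ => Φ p.1 p.2)
    (heq : ∀ x t : ℂ,
      ℏ * deriv (fun s => Φ x s) t =
        x * ℏ ^ 2 * deriv (fun y => deriv (fun z => Φ z t) y) x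
          + (x ^ 2 - t * x - (-b)) * ℏ * deriv (fun y => Φ y t) x
          - (-a) * x * Φ x t - ((-a) - 2 * (-b)) * t * Φ x t) :
    ∀ x t : ℂ,
      ℏ * deriv (fun s => Φ (I * x) (I * s)) t =
        x * (-ℏ) ^ 2 * deriv (fun y => deriv (fun z => Φ (I * z) (I * t)) y) x
          + (x ^ 2 - t * x - b) * (-ℏ) * deriv (fun y => Φ (I * y) (I * t)) x
          - a * x * Φ (I * x) (I * t) - (a - 2 * b) * t * Φ (I * x) (I * t) :=
  stmt8_general ℏ a b Φ heq
end

section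
/- Let ℏ, a, b, c, t ∈ ℂ with t ≠ 0, and let H_V be defined by t·H_V(x,ℏ∂_x,a,b,c,t) = x(x−1)(ℏ∂_x)² + (tx² − (b+c+t)x + b)ℏ∂_x + a(b+c−a+ℏ+t−tx). If Φ(x,t,a,b,c) solves ℏ∂_tΦ = H_V(x,ℏ∂_x,a,b,c,t)Φ, then Ψ(x,t) := Φ(x, −t, −a, −b, −c) solves ℏ∂_tΨ = H'_V(x,ℏ∂_x,a,b,c,t)Ψ, where H'_V is H_V with ℏ replaced by −ℏ. -/
/-- Symmetry of the Schrödinger equation for quantum Painlevé V: if `Φ`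
solves `ℏ∂ₜΦ = H_V(x, ℏ∂ₓ, −a, −b, −c, t)Φ` (for `t ≠ 0`), where
`t·H_V = x(x−1)(ℏ∂ₓ)² + (tx² − (b+c+t)x + b)ℏ∂ₓ + a(b+c−a+ℏ+t−tx)`,
then `Ψ(x,t) = Φ(x, −t)` solves `ℏ∂ₜΨ = H'_V(x, ℏ∂ₓ, a, b, c, t)Ψ`
with `ℏ` replaced by `−ℏ`. -/
theorem stmt10 (ℏ a b c : ℂ) (Φ : ℂ → ℂ → ℂ)
    (hΦ : ContDiff ℂ ⊤ fun p : ℂ × ℂ => Φ p.1 p.2)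
    (heq : ∀ x : ℂ, ∀ t : ℂ, t ≠ 0 →
      ℏ * deriv (fun s => Φ x s) t =
        (1 / t) * (x * (x - 1) * ℏ ^ 2 * deriv (fun y => deriv (fun z => Φ z t) y) x
          + (t * x ^ 2 - ((-b) + (-c) + t) * x + (-b)) * ℏ * deriv (fun y => Φ y t) x
          + (-a) * ((-b) + (-c) - (-a) + ℏ + t - t * x) * Φ x t)) :
    ∀ x : ℂ, ∀ t : ℂ, t ≠ 0 →
      ℏ * deriv (fun s => Φ x (-s)) t =
        (1 / t) * (x * (x - 1) * (-ℏ) ^ 2 * deriv (fun y => deriv (fun z => Φ z (-t)) y) x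
          + (t * x ^ 2 - (b + c + t) * x + b) * (-ℏ) * deriv (fun y => Φ y (-t)) x
          + a * (b + c - a + (-ℏ) + t - t * x) * Φ x (-t)) := by
  intro x t ht
  rw [deriv_comp_neg]
  have h := heq x (-t) (neg_ne_zero.mpr ht)
  rw [show (1 : ℂ) / -t = -(1 / t) by ring] at h
  linear_combination -h
end
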